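/- Let P be a metric space and H(P) its combinatorial horoball. For any two vertices (p,0), (q,0) at level zero with d(p,q) ≥ 1, the graph distance satisfies d_H((p,0),(q,0)) ≤ 2·log₂(d(p,q)) + 3. -/

import Mathlib

/-- The combinatorial horoball on a metric space `P`: vertices are `P × ℕ`;
`(p, l)` and `(q, l)` are joined by a horizontal edge when `0 < d(p,q) ≤ 2 ^ l`, and
`(p, l)`, `(p, l+1)` are joined by a vertical edge. -/
def horoball (P : Type*) [MetricSpace P] : SimpleGraph (P × ℕ) where
  Adj x y := (x.2 = y.2 ∧ 0 < dist x.1 y.1 ∧ dist x.1 y.1 ≤ 2 ^ x.2) ∨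
    (x.1 = y.1 ∧ (y.2 = x.2 + 1 ∨ x.2 = y.2 + 1))
  symm := by
    constructor
    rintro ⟨p, l⟩ ⟨q, m⟩ (⟨h1, h2, h3⟩ | ⟨h1, h2⟩)
    · subst h1
      exact Or.inl ⟨rfl, by rwa [dist_comm], by rwa [dist_comm]⟩
    · exact Or.inr ⟨h1.symm, h2.symm⟩
  loopless := by
    constructor
    rintro ⟨p, l⟩ (⟨_, h2, _⟩ | ⟨_, h2 | h2⟩) <;> simp_all

namespace horoball

variable {P : Type*} [MetricSpace P]

lemma adj_succ (p : P) (l : ℕ) : (horoball P).Adj (p, l) (p, l + 1) := Or.inr ⟨rfl, Or.inl rfl⟩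

def verticalWalk (p : P) (m : ℕ) : ∀ l : ℕ, (horoball P).Walk (p, m) (p, m + l)
  | 0 => .nil
  | l + 1 => (verticalWalk p m l).concat (adj_succ p (m + l))

@[simp]
lemma length_verticalWalk (p : P) (m l : ℕ) : (verticalWalk p m l).length = l := by
  induction l with
  | zero => rfl
  | succ l ih => simp [verticalWalk, ih]

lemma dist_le_of_dist_le_two_pow {p q : P} {m l : ℕ} (hpq : 0 < dist p q)
    (hle : dist p q ≤ 2 ^ (m + l)) : (horoball P).dist (p, m) (q, m) ≤ 2 * l + 1 := by
  have across : (horoball P).Adj (p, m + l) (q, m + l) := Or.inl ⟨rfl, hpq, hle⟩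
  let up_across_down := (verticalWalk p m l).append (.cons across (verticalWalk q m l).reverse)
  calc (horoball P).dist (p, m) (q, m) ≤ up_across_down.length := SimpleGraph.dist_le _
    _ = 2 * l + 1 := by
      simp only [up_across_down, SimpleGraph.Walk.length_append, SimpleGraph.Walk.length_cons,
        SimpleGraph.Walk.length_reverse, length_verticalWalk]
      omega

end horoball

lemma Real.le_rpow_ceil_logb {b x : ℝ} (hb : 1 < b) (hx : 0 < x) : x ≤ b ^ ⌈logb b x⌉₊ := by
  rw [← Real.rpow_natCast]
  exact (Real.logb_le_iff_le_rpow hb hx).1 (Nat.le_ceil _)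

/-- For points at level zero with `d(p,q) ≥ 1`, the horoball graph distance satisfies
`d_H((p,0),(q,0)) ≤ 2 log₂ d(p,q) + 3`. -/
theorem horoball_dist_log_bound {P : Type*} [MetricSpace P] (p q : P)
    (h : 1 ≤ dist p q) :
    ((horoball P).dist (p, 0) (q, 0) : ℝ) ≤ 2 * Real.logb 2 (dist p q) + 3 := by
  set l := ⌈Real.logb 2 (dist p q)⌉₊
  have hpos : 0 < dist p q := zero_lt_one.trans_le h
  have hdist : (horoball P).dist (p, 0) (q, 0) ≤ 2 * l + 1 :=
    horoball.dist_le_of_dist_le_two_pow hpos <| by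
      simpa using Real.le_rpow_ceil_logb one_lt_two hpos
  have hl : (l : ℝ) < Real.logb 2 (dist p q) + 1 :=
    Nat.ceil_lt_add_one (Real.logb_nonneg one_lt_two h)
  have : ((horoball P).dist (p, 0) (q, 0) : ℝ) ≤ 2 * l + 1 := by exact_mod_cast hdist
  linarith
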